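/- arXiv:1805.12469 — 2 statements merged into one kernel-verified Lean document; each statement's English description precedes it below -/
import Mathlib

section
/- For any 0 ≤ η ≤ 1 and any E ≥ 0, the function x ↦ g(η·g⁻¹(x) + (1−η)·E) is convex on [0,∞). -/
/-!
Write `N = g⁻¹ x`, `c = (1 - η) E` and `g' t = log (1 + 1/t)`. By the chain rule and the inverse
function rule the function has derivative `η g'(ηN + c) / g'(N)`, and `N` increases with `x`, so it
suffices that `n ↦ g'(ηn + c) / g'(n)` is increasing. Since `g'' t = -1/(t(t+1))`, its derivative has
the sign of `ψ(ηn + c) - η ψ(n)` with `ψ t = t(t+1) g'(t)`. This is nonnegative because `ψ` is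
increasing while `ψ(t)/t = (t+1) g'(t)` is decreasing (so `η ψ(n) ≤ ψ(ηn)` for `η ≤ 1`); both follow
from `1/(t+1) ≤ g'(t) ≤ 1/t`.
-/

open Real Set Filter

noncomputable def g (E : ℝ) : ℝ := (E + 1) * Real.log (E + 1) - E * Real.log E

noncomputable def ginv : ℝ → ℝ := Function.invFunOn g (Set.Ici 0)

noncomputable def gDeriv (t : ℝ) : ℝ := Real.log (t + 1) - Real.log t

lemma gDeriv_pos {t : ℝ} (ht : 0 < t) : 0 < gDeriv t :=
  sub_pos.2 (Real.log_lt_log ht (lt_add_one t))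

lemma hasDerivAt_gDeriv {t : ℝ} (ht : 0 < t) :
    HasDerivAt gDeriv (-(t * (t + 1))⁻¹) t := by
  refine ((((hasDerivAt_id' t).add_const 1).log (by positivity)).sub
    (hasDerivAt_log ht.ne')).congr_deriv ?_
  field_simp
  ring

lemma gDeriv_le_inv {t : ℝ} (ht : 0 < t) : gDeriv t ≤ t⁻¹ := by
  have h := Real.log_le_sub_one_of_pos (show 0 < (t + 1) / t by positivity)
  rw [Real.log_div (by positivity) ht.ne'] at h
  calc gDeriv t ≤ (t + 1) / t - 1 := h
    _ = t⁻¹ := by field_simp; ring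

lemma inv_add_one_le_gDeriv {t : ℝ} (ht : 0 < t) : (t + 1)⁻¹ ≤ gDeriv t := by
  have h := Real.log_le_sub_one_of_pos (show 0 < t / (t + 1) by positivity)
  rw [Real.log_div ht.ne' (by positivity)] at h
  have : t / (t + 1) - 1 = -(t + 1)⁻¹ := by field_simp; ring
  unfold gDeriv
  linarith

lemma g_zero : g 0 = 0 := by simp [g]

lemma continuous_g : Continuous g :=
  (continuous_mul_log.comp (continuous_id.add continuous_const)).sub continuous_mul_log

lemma hasDerivAt_g {t : ℝ} (ht : 0 < t) : HasDerivAt g (gDeriv t) t := by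
  refine (((hasDerivAt_mul_log (by positivity : t + 1 ≠ 0)).comp t
    ((hasDerivAt_id' t).add_const 1)).sub (hasDerivAt_mul_log ht.ne')).congr_deriv ?_
  rw [gDeriv]
  ring

lemma strictMonoOn_g : StrictMonoOn g (Ici 0) := by
  refine strictMonoOn_of_deriv_pos (convex_Ici 0) continuous_g.continuousOn fun x hx => ?_
  rw [interior_Ici] at hx
  rw [(hasDerivAt_g hx).deriv]
  exact gDeriv_pos hx

lemma tendsto_g_atTop : Tendsto g atTop atTop := by
  refine tendsto_atTop_mono' atTop ?_
    (tendsto_log_atTop.comp (tendsto_atTop_add_const_right _ 1 tendsto_id))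
  filter_upwards [eventually_gt_atTop (0 : ℝ)] with E hE
  have : E * Real.log E ≤ E * Real.log (E + 1) :=
    mul_le_mul_of_nonneg_left (Real.log_le_log hE (by linarith)) hE.le
  simp only [Function.comp_apply, id, g]
  nlinarith

lemma surjOn_g : SurjOn g (Ici 0) (Ici 0) := by
  simpa only [SurjOn, g_zero] using
    intermediate_value_Ici (a := 0) continuous_g.continuousOn tendsto_g_atTop

lemma ginv_g {t : ℝ} (ht : 0 ≤ t) : ginv (g t) = t :=
  strictMonoOn_g.injOn.leftInvOn_invFunOn ht

lemma g_ginv {x : ℝ} (hx : 0 ≤ x) : g (ginv x) = x :=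
  Function.invFunOn_eq (surjOn_g hx)

lemma ginv_nonneg {x : ℝ} (hx : 0 ≤ x) : 0 ≤ ginv x :=
  Function.invFunOn_mem (surjOn_g hx)

lemma ginv_zero : ginv 0 = 0 := by
  simpa only [g_zero] using ginv_g le_rfl

lemma ginv_pos {x : ℝ} (hx : 0 < x) : 0 < ginv x := by
  refine (ginv_nonneg hx.le).lt_of_ne fun h => hx.ne' ?_
  rw [← g_ginv hx.le, ← h, g_zero]

lemma monotoneOn_ginv : MonotoneOn ginv (Ici 0) := fun x hx y hy hxy => by
  rw [← strictMonoOn_g.le_iff_le (ginv_nonneg hx) (ginv_nonneg hy), g_ginv hx, g_ginv hy]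
  exact hxy

lemma image_ginv_Ici : ginv '' Ici 0 = Ici 0 := by
  refine (image_subset_iff.2 fun x hx => ginv_nonneg hx).antisymm fun t ht => ?_
  have hgt : 0 ≤ g t := g_zero ▸ strictMonoOn_g.monotoneOn self_mem_Ici ht ht
  exact ⟨g t, hgt, ginv_g ht⟩

lemma continuousOn_ginv : ContinuousOn ginv (Ici 0) := by
  intro a ha
  rcases (mem_Ici.1 ha).lt_or_eq with ha | rfl
  · refine (continuousAt_of_monotoneOn_of_image_mem_nhds monotoneOn_ginv
      (Ici_mem_nhds ha) ?_).continuousWithinAt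
    rw [image_ginv_Ici]
    exact Ici_mem_nhds (ginv_pos ha)
  · refine continuousWithinAt_right_of_monotoneOn_of_image_mem_nhdsWithin monotoneOn_ginv
      self_mem_nhdsWithin ?_
    rw [image_ginv_Ici, ginv_zero]
    exact self_mem_nhdsWithin

lemma hasDerivAt_ginv {x : ℝ} (hx : 0 < x) : HasDerivAt ginv (gDeriv (ginv x))⁻¹ x := by
  refine HasDerivAt.of_local_left_inverse (continuousOn_ginv.continuousAt (Ici_mem_nhds hx))
    (hasDerivAt_g (ginv_pos hx)) (gDeriv_pos (ginv_pos hx)).ne' ?_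
  filter_upwards [Ici_mem_nhds hx] with y hy
  exact g_ginv hy

lemma monotoneOn_Ioi_of_hasDerivAt_nonneg {f f' : ℝ → ℝ} {a : ℝ}
    (hf : ∀ x ∈ Ioi a, HasDerivAt f (f' x) x) (hf' : ∀ x ∈ Ioi a, 0 ≤ f' x) :
    MonotoneOn f (Ioi a) := by
  refine monotoneOn_of_hasDerivWithinAt_nonneg (f' := f') (convex_Ioi a)
    (fun x hx => (hf x hx).continuousAt.continuousWithinAt) ?_ ?_ <;> rw [interior_Ioi]
  exacts [fun x hx => (hf x hx).hasDerivWithinAt, hf']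

lemma antitoneOn_Ioi_of_hasDerivAt_nonpos {f f' : ℝ → ℝ} {a : ℝ}
    (hf : ∀ x ∈ Ioi a, HasDerivAt f (f' x) x) (hf' : ∀ x ∈ Ioi a, f' x ≤ 0) :
    AntitoneOn f (Ioi a) := by
  refine antitoneOn_of_hasDerivWithinAt_nonpos (f' := f') (convex_Ioi a)
    (fun x hx => (hf x hx).continuousAt.continuousWithinAt) ?_ ?_ <;> rw [interior_Ioi]
  exacts [fun x hx => (hf x hx).hasDerivWithinAt, hf']

lemma antitoneOn_add_one_mul_gDeriv : AntitoneOn (fun t => (t + 1) * gDeriv t) (Ioi 0) := by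
  refine antitoneOn_Ioi_of_hasDerivAt_nonpos (f' := fun t => gDeriv t - t⁻¹)
    (fun t (ht : 0 < t) => ?_) fun t (ht : 0 < t) => sub_nonpos.2 (gDeriv_le_inv ht)
  refine (((hasDerivAt_id' t).add_const 1).mul (hasDerivAt_gDeriv ht)).congr_deriv ?_
  field_simp
  ring

lemma monotoneOn_mul_add_one_mul_gDeriv :
    MonotoneOn (fun t => t * (t + 1) * gDeriv t) (Ioi 0) := by
  refine monotoneOn_Ioi_of_hasDerivAt_nonneg (f' := fun t => (2 * t + 1) * gDeriv t - 1)
    (fun t (ht : 0 < t) => ?_) fun t (ht : 0 < t) => sub_nonneg.2 ?_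
  · refine (((hasDerivAt_id' t).mul ((hasDerivAt_id' t).add_const 1)).mul
      (hasDerivAt_gDeriv ht)).congr_deriv ?_
    simp only [Pi.mul_apply]
    field_simp
    ring
  · calc (1 : ℝ) ≤ (2 * t + 1) * (t + 1)⁻¹ := by
          rw [← div_eq_mul_inv, one_le_div (by positivity)]
          linarith
      _ ≤ (2 * t + 1) * gDeriv t :=
          mul_le_mul_of_nonneg_left (inv_add_one_le_gDeriv ht) (by positivity)

lemma mul_mul_add_one_mul_gDeriv_le {η n c : ℝ} (hη : 0 < η) (hη1 : η ≤ 1) (hn : 0 < n)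
    (hc : 0 ≤ c) :
    η * (n * (n + 1) * gDeriv n) ≤ (η * n + c) * (η * n + c + 1) * gDeriv (η * n + c) := by
  have hηn : 0 < η * n := mul_pos hη hn
  calc η * (n * (n + 1) * gDeriv n) = η * n * ((n + 1) * gDeriv n) := by ring
    _ ≤ η * n * ((η * n + 1) * gDeriv (η * n)) :=
        mul_le_mul_of_nonneg_left
          (antitoneOn_add_one_mul_gDeriv hηn hn (by nlinarith)) hηn.le
    _ = η * n * (η * n + 1) * gDeriv (η * n) := by ring
    _ ≤ (η * n + c) * (η * n + c + 1) * gDeriv (η * n + c) :=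
        monotoneOn_mul_add_one_mul_gDeriv hηn (by positivity : 0 < η * n + c) (by linarith)

lemma monotoneOn_gDeriv_comp_div_gDeriv {η c : ℝ} (hη : 0 < η) (hη1 : η ≤ 1) (hc : 0 ≤ c) :
    MonotoneOn (fun n => gDeriv (η * n + c) / gDeriv n) (Ioi 0) := by
  refine monotoneOn_Ioi_of_hasDerivAt_nonneg
    (f' := fun n => ((η * n + c) * (η * n + c + 1) * gDeriv (η * n + c) -
      η * (n * (n + 1) * gDeriv n)) /
        ((η * n + c) * (η * n + c + 1) * (n * (n + 1)) * gDeriv n ^ 2))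
    (fun n (hn : 0 < n) => ?_) fun n (hn : 0 < n) => ?_
  · have hM : 0 < η * n + c := by positivity
    have hL := (gDeriv_pos hn).ne'
    refine (((hasDerivAt_gDeriv hM).comp n (((hasDerivAt_id' n).const_mul η).add_const c)).div
      (hasDerivAt_gDeriv hn) hL).congr_deriv ?_
    simp only [Function.comp_apply]
    field_simp
    ring
  · exact div_nonneg (sub_nonneg.2 (mul_mul_add_one_mul_gDeriv_le hη hη1 hn hc)) (by positivity)

lemma convexOn_comp_ginv {G G' : ℝ → ℝ} (hG : ContinuousOn G (Ici 0))
    (hG' : ∀ n ∈ Ioi 0, HasDerivAt G (G' n) n)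
    (hmono : MonotoneOn (fun n => G' n / gDeriv n) (Ioi 0)) :
    ConvexOn ℝ (Ici 0) (G ∘ ginv) := by
  have hderiv : ∀ x ∈ Ioi (0 : ℝ), HasDerivAt (G ∘ ginv) (G' (ginv x) / gDeriv (ginv x)) x :=
    fun x hx => ((hG' _ (ginv_pos hx)).comp x (hasDerivAt_ginv hx)).congr_deriv
      (div_eq_mul_inv _ _).symm
  refine MonotoneOn.convexOn_of_deriv (convex_Ici 0)
    (hG.comp continuousOn_ginv fun x hx => ginv_nonneg hx) ?_ ?_ <;> rw [interior_Ici]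
  · exact fun x hx => (hderiv x hx).differentiableAt.differentiableWithinAt
  · intro x (hx : 0 < x) y (hy : 0 < y) hxy
    rw [(hderiv x hx).deriv, (hderiv y hy).deriv]
    exact hmono (ginv_pos hx) (ginv_pos hy) (monotoneOn_ginv hx.le hy.le hxy)

theorem attenuator_thermal_entropy_convex (η E : ℝ) (hη0 : 0 ≤ η) (hη1 : η ≤ 1)
    (hE : 0 ≤ E) :
    ConvexOn ℝ (Set.Ici 0) (fun x => g (η * ginv x + (1 - η) * E)) := by
  rcases hη0.eq_or_lt with rfl | hη
  · simpa only [zero_mul, zero_add, sub_zero, one_mul] using convexOn_const (g E) (convex_Ici 0)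
  have hc : 0 ≤ (1 - η) * E := mul_nonneg (sub_nonneg.2 hη1) hE
  refine convexOn_comp_ginv (G := fun n => g (η * n + (1 - η) * E))
    (G' := fun n => gDeriv (η * n + (1 - η) * E) * η)
    (continuous_g.comp ((continuous_const.mul continuous_id).add continuous_const)).continuousOn
    (fun n (hn : 0 < n) => ?_) fun m hm n hn hmn => ?_
  · exact (hasDerivAt_g (by positivity)).comp n
      (((hasDerivAt_id' n).const_mul η).add_const _ |>.congr_deriv (mul_one η))
  · simp only [mul_div_right_comm _ η]
    exact mul_le_mul_of_nonneg_right (monotoneOn_gDeriv_comp_div_gDeriv hη hη1 hc hm hn hmn) hη.le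
end

section
/- Let f : [0,∞) → [0,∞) be increasing and convex, and suppose a classical channel (Markov kernel) Φ from a measurable space to probability distributions satisfies H(Φ(p)) ≥ f(H(p)) for all input distributions p, where H denotes Shannon entropy. Then for every n and every joint input distribution p on n copies, the n-fold product channel satisfies H(Φ^{⊗n}(p)) ≥ n·f(H(p)/n). -/
open Real Set Filter

/-!
Induction on `n`, splitting off the first coordinate: write the input as `X = (X₁, X')`, with
marginal law `P` of `X₁` and conditional laws `q a` of `X'` given `X₁ = a`, so that
`H(X) = H(P) + ∑ₐ P a H(q a)`. The outputs `Y₁` and `Y'` are conditionally independent given `X₁`,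
so concavity of entropy gives `H(Y₁ Y') ≥ H(Y₁) + H(Y' | X₁)`. The hypothesis on `Φ` bounds
`H(Y₁) ≥ f (H(P))`, the induction hypothesis bounds `H(Y' | X₁ = a) ≥ n f (H(q a) / n)`, and one
application of Jensen's inequality for `f`, with weight `1 / (n + 1)` on `H(P)` and weights
`n P a / (n + 1)` on the `H(q a) / n`, combines them into `(n + 1) f (H(X) / (n + 1))`.
-/

open Finset

theorem ConvexOn.add_one_mul_map_div_le {ι : Type*} [Fintype ι] {f : ℝ → ℝ}
    (hf : ConvexOn ℝ (Ici 0) f) {w h : ι → ℝ} (hw : w ∈ stdSimplex ℝ ι) (hh : ∀ i, 0 ≤ h i)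
    {B t : ℝ} (hB : 0 ≤ B) (ht : 0 ≤ t) (ht0 : t = 0 → ∀ i, h i = 0) :
    (t + 1) * f ((B + ∑ i, w i * h i) / (t + 1)) ≤ f B + ∑ i, w i * (t * f (h i / t)) := by
  rcases ht.eq_or_lt with rfl | htpos
  · simp [ht0 rfl]
  have jensen := hf.map_add_sum_le (t := univ) (v := 1 / (t + 1))
    (w := fun i => t * w i / (t + 1)) (p := fun i => h i / t) (q := B)
    (fun i _ => by have := hw.1 i; positivity)
    (by rw [← sum_div, ← mul_sum, hw.2]; field_simp; ring)
    (fun i _ => mem_Ici.mpr (div_nonneg (hh i) ht)) (by positivity) hB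
  have harg : (1 / (t + 1)) • B + ∑ i, (t * w i / (t + 1)) • (h i / t) =
      (B + ∑ i, w i * h i) / (t + 1) := by
    simp only [smul_eq_mul, add_div, sum_div]
    congr 1
    · ring
    · exact sum_congr rfl fun i _ => by field_simp
  rw [harg] at jensen
  calc (t + 1) * f ((B + ∑ i, w i * h i) / (t + 1))
      ≤ (t + 1) * ((1 / (t + 1)) • f B + ∑ i, (t * w i / (t + 1)) • f (h i / t)) := by
        gcongr
    _ = f B + ∑ i, w i * (t * f (h i / t)) := by
        simp only [smul_eq_mul, mul_add, mul_sum]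
        congr 1
        · field_simp
        · exact sum_congr rfl fun i _ => by field_simp

namespace ClassicalChannel

variable {ι γ δ : Type*} [Fintype ι]

/-- A channel `Φ : ι → γ → ℝ` is a family of output laws `Φ i ∈ stdSimplex ℝ γ`;
`output Φ p` is the law of its output on an input of law `p`. -/
def output (Φ : ι → γ → ℝ) (p : ι → ℝ) : γ → ℝ := fun y => ∑ i, p i * Φ i y

theorem output_smul (Φ : ι → γ → ℝ) (c : ℝ) (p : ι → ℝ) :
    output Φ (c • p) = c • output Φ p := by
  funext y
  simp only [output, Pi.smul_apply, smul_eq_mul, mul_sum, mul_assoc]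

def tensorPower {α β : Type*} (Φ : α → β → ℝ) (n : ℕ) : (Fin n → α) → (Fin n → β) → ℝ :=
  fun x y => ∏ k, Φ (x k) (y k)

theorem tensorPower_succ_cons {α β : Type*} (Φ : α → β → ℝ) (n : ℕ) (a : α) (x : Fin n → α)
    (b : β) (y : Fin n → β) :
    tensorPower Φ (n + 1) (Fin.cons a x) (Fin.cons b y) = Φ a b * tensorPower Φ n x y := by
  simp only [tensorPower, Fin.prod_univ_succ, Fin.cons_zero, Fin.cons_succ]

variable [Fintype γ] [Fintype δ]

noncomputable def entropy (p : γ → ℝ) : ℝ := ∑ x, negMulLog (p x)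

theorem entropy_eq_neg_sum_mul_log (p : γ → ℝ) : entropy p = -∑ x, p x * log (p x) := by
  simp only [entropy, negMulLog, neg_mul, sum_neg_distrib]

theorem entropy_nonneg {p : γ → ℝ} (hp : p ∈ stdSimplex ℝ γ) : 0 ≤ entropy p :=
  sum_nonneg fun x _ => negMulLog_nonneg (hp.1 x) (mem_Icc_of_mem_stdSimplex hp x).2

theorem entropy_eq_zero_of_unique [Unique γ] {p : γ → ℝ} (hp : p ∈ stdSimplex ℝ γ) :
    entropy p = 0 := by
  have h1 := hp.2
  rw [Fintype.sum_unique] at h1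
  rw [entropy, Fintype.sum_unique, h1, negMulLog_one]

theorem entropy_comp_equiv (e : δ ≃ γ) (p : γ → ℝ) : entropy (p ∘ e) = entropy p :=
  e.sum_comp fun x => negMulLog (p x)

theorem entropy_smul {m : γ → ℝ} (hm : m ∈ stdSimplex ℝ γ) (c : ℝ) :
    entropy (c • m) = c * entropy m + negMulLog c := by
  simp only [entropy, Pi.smul_apply, smul_eq_mul, negMulLog_mul, sum_add_distrib, ← sum_mul,
    ← mul_sum, hm.2, one_mul, add_comm]

theorem entropy_prod_eq_add_sum_mul_entropy (P : ι → ℝ) {q : ι → γ → ℝ}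
    (hq : ∀ i, q i ∈ stdSimplex ℝ γ) :
    entropy (fun z : ι × γ => P z.1 * q z.1 z.2) = entropy P + ∑ i, P i * entropy (q i) := by
  simp only [entropy, Fintype.sum_prod_type, negMulLog_mul, sum_add_distrib, ← sum_mul,
    ← mul_sum, (hq _).2, one_mul]

theorem nonempty_of_mem_stdSimplex {p : γ → ℝ} (hp : p ∈ stdSimplex ℝ γ) : Nonempty γ := by
  by_contra h
  rw [not_nonempty_iff] at h
  simp [stdSimplex_of_isEmpty_index] at hp

theorem exists_mem_stdSimplex_eq_smul [Nonempty γ] {r : γ → ℝ} (hr : ∀ x, 0 ≤ r x) :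
    ∃ m ∈ stdSimplex ℝ γ, r = (∑ x, r x) • m := by
  classical
  rcases (sum_nonneg fun x _ => hr x).eq_or_lt with h0 | hpos
  · refine ⟨_, single_mem_stdSimplex ℝ (Classical.arbitrary γ), ?_⟩
    rw [← h0, zero_smul]
    exact funext fun x => (sum_eq_zero_iff_of_nonneg fun y _ => hr y).mp h0.symm x (mem_univ x)
  · refine ⟨(∑ x, r x)⁻¹ • r, ⟨fun x => ?_, ?_⟩, ?_⟩
    · exact mul_nonneg (inv_nonneg.mpr hpos.le) (hr x)
    · simp only [Pi.smul_apply, smul_eq_mul, ← mul_sum, inv_mul_cancel₀ hpos.ne']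
    · rw [smul_smul, mul_inv_cancel₀ hpos.ne', one_smul]

/-- `P` is the first marginal and `q i` the conditional law given `i`, arbitrary where
`P i = 0`. -/
theorem exists_eq_mul_of_mem_stdSimplex_prod {p : ι × γ → ℝ} (hp : p ∈ stdSimplex ℝ (ι × γ)) :
    ∃ P ∈ stdSimplex ℝ ι, ∃ q : ι → γ → ℝ, (∀ i, q i ∈ stdSimplex ℝ γ) ∧
      p = fun z => P z.1 * q z.1 z.2 := by
  have : Nonempty γ := (nonempty_of_mem_stdSimplex hp).map Prod.snd
  choose q hq hpq using fun i => exists_mem_stdSimplex_eq_smul fun x => hp.1 (i, x)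
  refine ⟨fun i => ∑ x, p (i, x), ⟨fun i => sum_nonneg fun x _ => hp.1 _, ?_⟩, q, hq, ?_⟩
  · rw [← Fintype.sum_prod_type']
    exact hp.2
  · funext z
    exact congrFun (hpq z.1) z.2

theorem output_mem_stdSimplex {Φ : ι → γ → ℝ} (hΦ : ∀ i, Φ i ∈ stdSimplex ℝ γ) {p : ι → ℝ}
    (hp : p ∈ stdSimplex ℝ ι) : output Φ p ∈ stdSimplex ℝ γ := by
  refine ⟨fun y => sum_nonneg fun i _ => mul_nonneg (hp.1 i) ((hΦ i).1 y), ?_⟩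
  simp only [output]
  rw [sum_comm]
  simp only [← mul_sum, (hΦ _).2, mul_one, hp.2]

theorem sum_mul_entropy_le_entropy_output {Φ : ι → γ → ℝ} (hΦ : ∀ i y, 0 ≤ Φ i y)
    {p : ι → ℝ} (hp : p ∈ stdSimplex ℝ ι) :
    ∑ i, p i * entropy (Φ i) ≤ entropy (output Φ p) := by
  have jensen (y : γ) : ∑ i, p i * negMulLog (Φ i y) ≤ negMulLog (∑ i, p i * Φ i y) :=
    concaveOn_negMulLog.le_map_sum (fun i _ => hp.1 i) hp.2 fun i _ => hΦ i y
  simp only [entropy, mul_sum]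
  rw [sum_comm]
  exact sum_le_sum fun y _ => jensen y

theorem negMulLog_sum_add_sum_mul_entropy_le_entropy_output [Nonempty ι] {Φ : ι → γ → ℝ}
    (hΦ : ∀ i, Φ i ∈ stdSimplex ℝ γ) {v : ι → ℝ} (hv : ∀ i, 0 ≤ v i) :
    negMulLog (∑ i, v i) + ∑ i, v i * entropy (Φ i) ≤ entropy (output Φ v) := by
  obtain ⟨u, hu, hvu⟩ := exists_mem_stdSimplex_eq_smul hv
  have hc : 0 ≤ ∑ i, v i := sum_nonneg fun i _ => hv i
  have hmix := mul_le_mul_of_nonneg_left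
    (sum_mul_entropy_le_entropy_output (fun i => (hΦ i).1) hu) hc
  have hsum : ∑ i, v i * entropy (Φ i) = (∑ i, v i) * ∑ i, u i * entropy (Φ i) := by
    rw [mul_sum]
    exact sum_congr rfl fun i _ => by rw [congrFun hvu i, Pi.smul_apply, smul_eq_mul, mul_assoc]
  rw [show output Φ v = (∑ i, v i) • output Φ u by rw [← output_smul, ← hvu],
    entropy_smul (output_mem_stdSimplex hΦ hu), hsum]
  linarith

theorem entropy_output_add_sum_mul_entropy_le {w : ι → ℝ} (hw : w ∈ stdSimplex ℝ ι)
    {t : ι → δ → ℝ} (ht : ∀ i, t i ∈ stdSimplex ℝ δ) {s : ι → γ → ℝ}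
    (hs : ∀ i, s i ∈ stdSimplex ℝ γ) :
    entropy (output t w) + ∑ i, w i * entropy (s i) ≤
      entropy (output (fun i (z : δ × γ) => t i z.1 * s i z.2) w) := by
  have : Nonempty ι := nonempty_of_mem_stdSimplex hw
  have slice (b : δ) := negMulLog_sum_add_sum_mul_entropy_le_entropy_output hs
    fun i => mul_nonneg (hw.1 i) ((ht i).1 b)
  have hsum : ∑ b, ∑ i, w i * t i b * entropy (s i) = ∑ i, w i * entropy (s i) := by
    rw [sum_comm]
    simp only [mul_right_comm _ _ (entropy _), ← mul_sum, (ht _).2, mul_one]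
  calc entropy (output t w) + ∑ i, w i * entropy (s i)
      = ∑ b, (negMulLog (∑ i, w i * t i b) + ∑ i, w i * t i b * entropy (s i)) := by
        rw [sum_add_distrib, hsum]; rfl
    _ ≤ ∑ b, entropy (output s fun i => w i * t i b) := sum_le_sum fun b _ => slice b
    _ = entropy (output (fun i (z : δ × γ) => t i z.1 * s i z.2) w) := by
        simp only [entropy, output, Fintype.sum_prod_type, mul_assoc]

theorem tensorPower_mem_stdSimplex {α β : Type*} [Fintype β] {Φ : α → β → ℝ}
    (hΦ : ∀ a, Φ a ∈ stdSimplex ℝ β) (n : ℕ) (x : Fin n → α) :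
    tensorPower Φ n x ∈ stdSimplex ℝ (Fin n → β) := by
  refine ⟨fun y => prod_nonneg fun k _ => (hΦ (x k)).1 (y k), ?_⟩
  change ∑ y : Fin n → β, ∏ k, Φ (x k) (y k) = 1
  rw [← Fintype.prod_sum]
  exact prod_eq_one fun k _ => (hΦ (x k)).2

theorem output_tensorPower_succ_comp_consEquiv {α β : Type*} [Fintype α] (Φ : α → β → ℝ) (n : ℕ)
    {p : (Fin (n + 1) → α) → ℝ} {P : α → ℝ} {q : α → (Fin n → α) → ℝ}
    (hpq : p ∘ Fin.consEquiv (fun _ => α) = fun z => P z.1 * q z.1 z.2) :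
    output (tensorPower Φ (n + 1)) p ∘ Fin.consEquiv (fun _ => β) =
      output (fun a (z : β × (Fin n → β)) => Φ a z.1 * output (tensorPower Φ n) (q a) z.2) P := by
  funext ⟨b, y⟩
  simp only [Function.comp_apply, output]
  rw [← (Fin.consEquiv fun _ => α).sum_comp, Fintype.sum_prod_type]
  refine sum_congr rfl fun a _ => ?_
  rw [mul_sum, mul_sum]
  refine sum_congr rfl fun x _ => ?_
  change p (Fin.cons a x) * tensorPower Φ (n + 1) (Fin.cons a x) (Fin.cons b y) = _
  rw [show p (Fin.cons a x) = P a * q a x from congrFun hpq (a, x), tensorPower_succ_cons]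
  ring

theorem le_entropy_output_tensorPower {α β : Type*} [Fintype α] [Fintype β] {Φ : α → β → ℝ}
    (hΦ : ∀ a, Φ a ∈ stdSimplex ℝ β) {f : ℝ → ℝ} (hconv : ConvexOn ℝ (Ici 0) f)
    (hf : ∀ p ∈ stdSimplex ℝ α, f (entropy p) ≤ entropy (output Φ p)) (n : ℕ)
    {p : (Fin n → α) → ℝ} (hp : p ∈ stdSimplex ℝ (Fin n → α)) :
    n * f (entropy p / n) ≤ entropy (output (tensorPower Φ n) p) := by
  induction n with
  | zero =>
    simpa using entropy_nonneg (output_mem_stdSimplex (tensorPower_mem_stdSimplex hΦ 0) hp)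
  | succ n ih =>
    have hp' : p ∘ Fin.consEquiv (fun _ => α) ∈ stdSimplex ℝ (α × (Fin n → α)) :=
      ⟨fun z => hp.1 _, by rw [← hp.2]; exact (Fin.consEquiv _).sum_comp p⟩
    obtain ⟨P, hP, q, hq, hpq⟩ := exists_eq_mul_of_mem_stdSimplex_prod hp'
    set s := fun a => output (tensorPower Φ n) (q a)
    have hs (a : α) : s a ∈ stdSimplex ℝ (Fin n → β) :=
      output_mem_stdSimplex (tensorPower_mem_stdSimplex hΦ n) (hq a)
    have chain : entropy p = entropy P + ∑ a, P a * entropy (q a) := by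
      rw [← entropy_comp_equiv (Fin.consEquiv _) p, hpq, entropy_prod_eq_add_sum_mul_entropy P hq]
    have hq_zero : (n : ℝ) = 0 → ∀ a, entropy (q a) = 0 := by
      intro hn a
      obtain rfl : n = 0 := by exact_mod_cast hn
      exact entropy_eq_zero_of_unique (hq a)
    calc ((n + 1 : ℕ) : ℝ) * f (entropy p / (n + 1 : ℕ))
        ≤ f (entropy P) + ∑ a, P a * (n * f (entropy (q a) / n)) := by
          rw [chain]
          push_cast
          exact hconv.add_one_mul_map_div_le hP (fun a => entropy_nonneg (hq a))
            (entropy_nonneg hP) n.cast_nonneg hq_zero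
      _ ≤ entropy (output Φ P) + ∑ a, P a * entropy (s a) := by
          gcongr with a
          · exact hf P hP
          · exact hP.1 a
          · exact ih (hq a)
      _ ≤ entropy (output (fun a (z : β × (Fin n → β)) => Φ a z.1 * s a z.2) P) :=
          entropy_output_add_sum_mul_entropy_le hP hΦ hs
      _ = entropy (output (tensorPower Φ (n + 1)) p) := by
          rw [← output_tensorPower_succ_comp_consEquiv Φ n hpq, entropy_comp_equiv]

end ClassicalChannel

open ClassicalChannel in
theorem classical_channel_output_entropy_bound_general
    {α β : Type} [Fintype α] [Fintype β]
    (Φ : α → β → ℝ) (hΦ0 : ∀ a b, 0 ≤ Φ a b) (hΦ1 : ∀ a, ∑ b, Φ a b = 1)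
    (f : ℝ → ℝ)
    (hconv : ConvexOn ℝ (Set.Ici 0) f)
    (hf : ∀ p : α → ℝ, (∀ a, 0 ≤ p a) → ∑ a, p a = 1 →
      f (-∑ a, p a * Real.log (p a)) ≤
        -∑ b, (∑ a, p a * Φ a b) * Real.log (∑ a, p a * Φ a b)) :
    ∀ n : ℕ, 0 < n → ∀ p : (Fin n → α) → ℝ, (∀ x, 0 ≤ p x) → ∑ x, p x = 1 →
      (n : ℝ) * f ((-∑ x, p x * Real.log (p x)) / n) ≤
        -∑ y : Fin n → β,
          (∑ x, p x * ∏ i, Φ (x i) (y i)) * Real.log (∑ x, p x * ∏ i, Φ (x i) (y i)) := by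
  intro n _ p hp0 hp1
  have hfΦ (p : α → ℝ) (hp : p ∈ stdSimplex ℝ α) : f (entropy p) ≤ entropy (output Φ p) := by
    simpa only [entropy_eq_neg_sum_mul_log, output] using hf p hp.1 hp.2
  simpa only [entropy_eq_neg_sum_mul_log, output, tensorPower] using
    le_entropy_output_tensorPower (fun a => ⟨hΦ0 a, hΦ1 a⟩) hconv hfΦ n ⟨hp0, hp1⟩

theorem classical_channel_output_entropy_bound
    {α β : Type} [Fintype α] [Fintype β]
    (Φ : α → β → ℝ) (hΦ0 : ∀ a b, 0 ≤ Φ a b) (hΦ1 : ∀ a, ∑ b, Φ a b = 1)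
    (f : ℝ → ℝ) (hf0 : ∀ x, 0 ≤ x → 0 ≤ f x)
    (hmono : MonotoneOn f (Set.Ici 0)) (hconv : ConvexOn ℝ (Set.Ici 0) f)
    (hf : ∀ p : α → ℝ, (∀ a, 0 ≤ p a) → ∑ a, p a = 1 →
      f (-∑ a, p a * Real.log (p a)) ≤
        -∑ b, (∑ a, p a * Φ a b) * Real.log (∑ a, p a * Φ a b)) :
    ∀ n : ℕ, 0 < n → ∀ p : (Fin n → α) → ℝ, (∀ x, 0 ≤ p x) → ∑ x, p x = 1 →
      (n : ℝ) * f ((-∑ x, p x * Real.log (p x)) / n) ≤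
        -∑ y : Fin n → β,
          (∑ x, p x * ∏ i, Φ (x i) (y i)) * Real.log (∑ x, p x * ∏ i, Φ (x i) (y i)) :=
  classical_channel_output_entropy_bound_general Φ hΦ0 hΦ1 f hconv hf
end
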